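/- For any h, a ∈ ℂ^L with a ≠ 0 and P > 0, one has log((‖a‖² − P·|h* a|²/(1 + P·‖h‖²))⁻¹) ≤ log((1 + P·‖h‖²)/‖a‖²). In particular, if ‖a‖² ≥ 1 + P·‖h‖², then ‖a‖² − P·|h* a|²/(1 + P·‖h‖²) ≥ 1, so the computation rate log((‖a‖² − P·|h* a|²/(1 + P·‖h‖²))⁻¹) is nonpositive. -/

import Mathlib

/-! Cauchy–Schwarz gives `‖a‖² - P‖⟪h, a⟫‖² / (1 + P‖h‖²) ≥ ‖a‖² / (1 + P‖h‖²)`; inverting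
and taking logarithms yields the bound, and the bound is at least `1` once
`‖a‖² ≥ 1 + P‖h‖²`. -/

open scoped InnerProductSpace

theorem norm_sq_div_le_norm_sq_sub_inner {𝕜 E : Type*} [RCLike 𝕜] [NormedAddCommGroup E]
    [InnerProductSpace 𝕜 E] (h a : E) {P : ℝ} (hP : 0 ≤ P) :
    ‖a‖ ^ 2 / (1 + P * ‖h‖ ^ 2) ≤ ‖a‖ ^ 2 - P * ‖⟪h, a⟫_𝕜‖ ^ 2 / (1 + P * ‖h‖ ^ 2) := by
  have hD : 0 < 1 + P * ‖h‖ ^ 2 := by positivity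
  have hCS : ‖⟪h, a⟫_𝕜‖ ^ 2 ≤ ‖h‖ ^ 2 * ‖a‖ ^ 2 := by
    rw [← mul_pow]
    exact pow_le_pow_left₀ (norm_nonneg _) (norm_inner_le_norm h a) 2
  rw [div_le_iff₀ hD, sub_mul, div_mul_cancel₀ _ hD.ne']
  nlinarith [mul_le_mul_of_nonneg_left hCS hP]

/-- Lemma 2: upper bound on the computation rate, and nonpositivity when
`‖a‖² ≥ 1 + P‖h‖²`. -/
theorem stmt_1 {L : ℕ} (h a : EuclideanSpace ℂ (Fin L)) (ha : a ≠ 0) (P : ℝ) (hP : 0 < P) :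
    Real.log ((‖a‖ ^ 2 - P * ‖(inner ℂ h a : ℂ)‖ ^ 2 / (1 + P * ‖h‖ ^ 2))⁻¹)
        ≤ Real.log ((1 + P * ‖h‖ ^ 2) / ‖a‖ ^ 2) ∧
      (1 + P * ‖h‖ ^ 2 ≤ ‖a‖ ^ 2 →
        1 ≤ ‖a‖ ^ 2 - P * ‖(inner ℂ h a : ℂ)‖ ^ 2 / (1 + P * ‖h‖ ^ 2) ∧
        Real.log ((‖a‖ ^ 2 - P * ‖(inner ℂ h a : ℂ)‖ ^ 2 / (1 + P * ‖h‖ ^ 2))⁻¹) ≤ 0) := by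
  set D := 1 + P * ‖h‖ ^ 2
  set x := ‖a‖ ^ 2 - P * ‖(inner ℂ h a : ℂ)‖ ^ 2 / D
  have hD : 0 < D := by positivity
  have ha2 : 0 < ‖a‖ ^ 2 := pow_pos (norm_pos_iff.mpr ha) 2
  have hx : ‖a‖ ^ 2 / D ≤ x := norm_sq_div_le_norm_sq_sub_inner h a hP.le
  have hx_pos : 0 < x := (div_pos ha2 hD).trans_le hx
  refine ⟨?_, fun hle => ?_⟩
  · have hinv : x⁻¹ ≤ D / ‖a‖ ^ 2 := by
      simpa only [inv_div] using inv_anti₀ (div_pos ha2 hD) hx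
    exact Real.log_le_log (inv_pos.mpr hx_pos) hinv
  · have hx_one : 1 ≤ x := ((one_le_div hD).mpr hle).trans hx
    exact ⟨hx_one, Real.log_nonpos (inv_nonneg.mpr hx_pos.le) (inv_le_one_of_one_le₀ hx_one)⟩
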